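/- Let λ_1 = 1 and for n ≥ 2 let λ_n = 2/(s_n^{n-1}(s_n+1)^2(s_n-1)^{n-3}). Then for every n ≥ 2, λ_n ≤ 2 λ_{n-1}/(s_n^{n-1}(s_n + 1)); in particular the ratio λ_n s_n^{n-1}(s_n+1)/(2 λ_{n-1}) equals 3/4 for n = 2 and 28/33 for n = 3. -/
import Mathlib

def sylvester : ℕ → ℕ
  | 0 => 2
  | n + 1 => sylvester n * (sylvester n - 1) + 1

/-- The constants λₙ from the inductive log canonical threshold estimate:
λ₁ = 1 and λₙ = 2/(sₙ^{n-1} (sₙ+1)² (sₙ-1)^{n-3}) for n ≥ 2 (note that the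
exponent n - 3 may be negative, so it is taken as an integer power). -/
noncomputable def lctConst : ℕ → ℚ := fun n =>
  if n = 1 then 1
  else 2 / ((sylvester n : ℚ) ^ (n - 1) * ((sylvester n : ℚ) + 1) ^ 2 *
    ((sylvester n : ℚ) - 1) ^ ((n : ℤ) - 3))

lemma sylvester_ge_two : ∀ n, 2 ≤ sylvester n
  | 0 => le_refl 2
  | n + 1 => by
      have h := sylvester_ge_two n
      have h2 := Nat.mul_le_mul h (show 1 ≤ sylvester n - 1 by omega)
      simp only [sylvester]
      omega

lemma sylvester_ge_seven {n : ℕ} (hn : 2 ≤ n) : 7 ≤ sylvester n := by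
  obtain ⟨m, rfl⟩ : ∃ m, n = m + 2 := ⟨n - 2, by omega⟩
  have h1 : 2 ≤ sylvester m := sylvester_ge_two m
  have h2 : 3 ≤ sylvester (m + 1) := by
    have := Nat.mul_le_mul h1 (show 1 ≤ sylvester m - 1 by omega)
    show 3 ≤ sylvester m * (sylvester m - 1) + 1
    omega
  have := Nat.mul_le_mul h2 (show 2 ≤ sylvester (m + 1) - 1 by omega)
  show 7 ≤ sylvester (m + 1) * (sylvester (m + 1) - 1) + 1
  omega

theorem lctConst_inductive_step :
    (∀ n : ℕ, 2 ≤ n →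
      lctConst n ≤ 2 * lctConst (n - 1) / ((sylvester n : ℚ) ^ (n - 1) * ((sylvester n : ℚ) + 1))) ∧
    lctConst 2 * (sylvester 2 : ℚ) ^ 1 * ((sylvester 2 : ℚ) + 1) / (2 * lctConst 1) = 3 / 4 ∧
    lctConst 3 * (sylvester 3 : ℚ) ^ 2 * ((sylvester 3 : ℚ) + 1) / (2 * lctConst 2) = 28 / 33 := by
  have hs1 : sylvester 1 = 3 := rfl
  have hs2 : sylvester 2 = 7 := rfl
  have hs3 : sylvester 3 = 43 := rfl
  refine ⟨?_, ?_, ?_⟩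
  · intro n hn
    rcases eq_or_lt_of_le hn with h2 | h3
    · subst h2
      norm_num [lctConst, hs1, hs2]
    · obtain ⟨m, rfl⟩ : ∃ m, n = m + 3 := ⟨n - 3, by omega⟩
      set t : ℚ := (sylvester (m + 2) : ℚ) with ht
      set s : ℚ := (sylvester (m + 3) : ℚ) with hsdef
      have h7 : 7 ≤ sylvester (m + 2) := sylvester_ge_seven (by omega)
      have ht7 : (7 : ℚ) ≤ t := by rw [ht]; exact_mod_cast h7
      have hst : s = t * (t - 1) + 1 := by
        have h1 : 1 ≤ sylvester (m + 2) := by have := sylvester_ge_two (m + 2); omega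
        show ((sylvester (m + 2) * (sylvester (m + 2) - 1) + 1 : ℕ) : ℚ) = _
        push_cast [Nat.cast_sub h1]
        ring
      have htpos : (0 : ℚ) < t := by linarith
      have ht1pos : (0 : ℚ) < t - 1 := by linarith
      have hspos : (0 : ℚ) < s := by nlinarith
      have hs1pos : (0 : ℚ) < s + 1 := by linarith
      have hsm1 : s - 1 = t * (t - 1) := by rw [hst]; ring
      have hsm1pos : (0 : ℚ) < s - 1 := by rw [hsm1]; positivity
      have hA : lctConst (m + 3) = 2 / (s ^ (m + 2) * (s + 1) ^ 2 * (s - 1) ^ m) := by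
        simp only [lctConst, if_neg (by omega : ¬ m + 3 = 1)]
        rw [← hsdef]
        have e2 : ((m + 3 : ℕ) : ℤ) - 3 = (m : ℤ) := by push_cast; ring
        rw [e2, zpow_natCast]
        norm_num
      have hB : lctConst (m + 2) = 2 / (t ^ (m + 1) * (t + 1) ^ 2 * ((t - 1) ^ m * (t - 1)⁻¹)) := by
        simp only [lctConst, if_neg (by omega : ¬ m + 2 = 1)]
        rw [← ht]
        have e2 : ((m + 2 : ℕ) : ℤ) - 3 = (m : ℤ) - 1 := by push_cast; ring
        rw [e2, zpow_sub₀ (by positivity : t - 1 ≠ 0), zpow_natCast, zpow_one]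
        rw [div_eq_mul_inv ((t-1)^m)]
        norm_num
      have hBC : lctConst (m + 3 - 1) = lctConst (m + 2) := rfl
      rw [hBC, hA, hB, show m + 3 - 1 = m + 2 from rfl]
      have hrw : 2 * (2 / (t ^ (m + 1) * (t + 1) ^ 2 * ((t - 1) ^ m * (t - 1)⁻¹))) /
          (s ^ (m + 2) * (s + 1)) =
          4 * (t - 1) / (t ^ (m + 1) * (t + 1) ^ 2 * (t - 1) ^ m * (s ^ (m + 2) * (s + 1))) := by
        field_simp
        ring
      rw [hrw, div_le_div_iff₀ (by positivity) (by positivity)]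
      have key : 2 * t * (t + 1) ^ 2 ≤ 4 * (t - 1) * (s + 1) := by
        rw [hst]; nlinarith [sq_nonneg t, mul_nonneg (sq_nonneg t) (by linarith : (0:ℚ) ≤ t - 7)]
      have hpm : (s - 1) ^ m = t ^ m * (t - 1) ^ m := by rw [hsm1, mul_pow]
      calc 2 * (t ^ (m + 1) * (t + 1) ^ 2 * (t - 1) ^ m * (s ^ (m + 2) * (s + 1)))
          = 2 * t * (t + 1) ^ 2 * (t ^ m * (t - 1) ^ m * (s ^ (m + 2) * (s + 1))) := by
            rw [pow_succ]; ring
        _ ≤ 4 * (t - 1) * (s + 1) * (t ^ m * (t - 1) ^ m * (s ^ (m + 2) * (s + 1))) := by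
            apply mul_le_mul_of_nonneg_right key (by positivity)
        _ = 4 * (t - 1) * (s ^ (m + 2) * (s + 1) ^ 2 * (s - 1) ^ m) := by
            rw [hpm]; ring
  · norm_num [lctConst, hs1, hs2]
  · norm_num [lctConst, hs2, hs3]
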